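/- arXiv:1208.2385 — 2 statements merged into one kernel-verified Lean document; each statement's English description precedes it below -/
import Mathlib

section
/- Let f, g ∈ ℂ[z] be polynomials, not both zero, let m = max(deg f, deg g), and let n ≥ m. Then the dimension of the kernel of the n×n Bezoutian matrix B_n = H_f·T_g − H_g·T_f (of size n) equals n − m + deg gcd(f, g). -/
open Polynomial Matrix

/-- The `n × n` Hankel matrix of a polynomial `f`: `(H_f)_{jk} = f_{j+k+1}`. -/
noncomputable def Hk (n : ℕ) (f : ℂ[X]) : Matrix (Fin n) (Fin n) ℂ :=
  Matrix.of fun j k => f.coeff ((j : ℕ) + (k : ℕ) + 1)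

/-- The `n × n` upper triangular Toeplitz matrix of a polynomial `f`:
`(T_f)_{jk} = f_{k-j}` if `k ≥ j`, and `0` otherwise. -/
noncomputable def Tp (n : ℕ) (f : ℂ[X]) : Matrix (Fin n) (Fin n) ℂ :=
  Matrix.of fun j k => if (j : ℕ) ≤ (k : ℕ) then f.coeff ((k : ℕ) - (j : ℕ)) else 0

/-- The `n × n` reverse identity matrix `Z`. -/
noncomputable def Rv (n : ℕ) : Matrix (Fin n) (Fin n) ℂ :=
  Matrix.of fun j k => if (j : ℕ) + (k : ℕ) = n - 1 then 1 else 0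

/-- The `n × n` Bezoutian matrix of `f` and `g`: `B = H_f T_g - H_g T_f`. -/
noncomputable def Bz (n : ℕ) (f g : ℂ[X]) : Matrix (Fin n) (Fin n) ℂ :=
  Hk n f * Tp n g - Hk n g * Tp n f

/-- The `2n × 2n` resultant matrix of `f` and `g`:
`R = [[T_f, Z H_f], [T_g, Z H_g]]`. -/
noncomputable def Rs (n : ℕ) (f g : ℂ[X]) : Matrix (Fin n ⊕ Fin n) (Fin n ⊕ Fin n) ℂ :=
  Matrix.fromBlocks (Tp n f) (Rv n * Hk n f) (Tp n g) (Rv n * Hk n g)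

/-!
Identify a vector `v ∈ ℂⁿ` with the polynomial `q = ∑ vⱼ X^(n-1-j)` of degree `< n`. In these
coordinates `T_b v` becomes `b q mod Xⁿ`, and `(H_a u)_j` becomes the coefficient of `X^(n+j)` in
`a · u`. Hence `B_n v` lists the coefficients in degrees `n, …, 2n-1` of
`f (g q mod Xⁿ) - g (f q mod Xⁿ)`, a polynomial divisible by `Xⁿ` and of degree `< 2n`, so
`B_n v = 0` iff `f (g q mod Xⁿ) = g (f q mod Xⁿ)`.

Write `f = d f₁`, `g = d g₁` with `d = gcd(f, g)` and `k = max(deg f₁, deg g₁) = m - deg d`.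
Cancelling `d`, the equation becomes `f₁ (g₁ r mod Xⁿ) = g₁ (f₁ r mod Xⁿ)` for `r = d q mod Xⁿ`.
Coprimality of `f₁, g₁` forces `f₁ r` and `g₁ r` to be already reduced, so the equation holds iff
`deg r < n - k`. Thus the kernel of `B_n` is the kernel of the map sending `v` to the coefficients
of `d q` in degrees `n - k, …, n - 1`; this map is onto because multiplication by `d` is injective
on polynomials of degree `< k`, and its kernel has dimension `n - k = n - m + deg d`.
-/

section CommRing

variable {R : Type*} [CommRing R]

theorem IsCoprime.exists_eq_mul_of_mul_eq_mul {a b x y : R} (hab : IsCoprime a b)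
    (h : a * y = b * x) : ∃ c, x = a * c ∧ y = b * c := by
  obtain ⟨u, v, huv⟩ := hab
  refine ⟨u * x + v * y, ?_, ?_⟩
  · linear_combination (-x) * huv - v * h
  · linear_combination (-y) * huv + u * h

theorem IsCoprime.dvd_of_dvd_mul_of_dvd_mul {a b q r : R} (hab : IsCoprime a b)
    (ha : q ∣ a * r) (hb : q ∣ b * r) : q ∣ r := by
  obtain ⟨u, v, huv⟩ := hab
  have : r = u * (a * r) + v * (b * r) := by linear_combination (-r) * huv
  rw [this]
  exact dvd_add (ha.mul_left u) (hb.mul_left v)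

end CommRing

theorem EuclideanDomain.exists_eq_gcd_mul_isCoprime {R : Type*} [EuclideanDomain R]
    [DecidableEq R] {a b : R} (h : EuclideanDomain.gcd a b ≠ 0) :
    ∃ a₁ b₁, a = EuclideanDomain.gcd a b * a₁ ∧ b = EuclideanDomain.gcd a b * b₁ ∧
      IsCoprime a₁ b₁ := by
  obtain ⟨a₁, ha⟩ := EuclideanDomain.gcd_dvd_left a b
  obtain ⟨b₁, hb⟩ := EuclideanDomain.gcd_dvd_right a b
  refine ⟨a₁, b₁, ha, hb, EuclideanDomain.gcdA a b, EuclideanDomain.gcdB a b,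
    mul_left_cancel₀ h ?_⟩
  linear_combination -(EuclideanDomain.gcd_eq_gcd_ab a b) - EuclideanDomain.gcdA a b * ha -
    EuclideanDomain.gcdB a b * hb

namespace Polynomial

variable {R : Type*} [CommRing R]

theorem coeff_modByMonic_X_pow (p : R[X]) (n i : ℕ) :
    (p %ₘ X ^ n).coeff i = if i < n then p.coeff i else 0 := by
  nontriviality R
  split_ifs with hi
  · simpa [coeff_X_pow_mul', hi.not_ge] using congrArg (coeff · i) (modByMonic_add_div p (X ^ n))
  · exact coeff_eq_zero_of_degree_lt
      ((degree_modByMonic_lt p (monic_X_pow n)).trans_le (by simpa using not_lt.mp hi))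

theorem degree_modByMonic_X_pow_lt_iff (p : R[X]) {n k : ℕ} (hk : k ≤ n) :
    (p %ₘ X ^ n).degree < ↑(n - k) ↔ ∀ b : Fin k, p.coeff (n - k + b) = 0 := by
  simp_rw [degree_lt_iff_coeff_zero, coeff_modByMonic_X_pow]
  refine ⟨fun h b => ?_, fun h i hi => ?_⟩
  · simpa [show n - k + b < n by omega] using h (n - k + b) le_self_add
  · split_ifs with hin
    · simpa [show n - k + (i - (n - k)) = i by omega] using h ⟨i - (n - k), by omega⟩
    · rfl

theorem mul_modByMonic_modByMonic (a p : R[X]) {q : R[X]} (hq : q.Monic) :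
    a * (p %ₘ q) %ₘ q = a * p %ₘ q :=
  modByMonic_eq_of_dvd_sub hq <| by
    rw [← mul_sub]; exact (dvd_modByMonic_sub p q).mul_left a

theorem degree_mul_lt_of_natDegree_le {x r : R[X]} {k N : ℕ} (hx : x.natDegree ≤ k)
    (hr : r.degree < ↑(N - k)) : (x * r).degree < N := by
  rcases eq_or_ne r 0 with rfl | hr0
  · simp
  have hrN : r.natDegree < N - k := by
    rwa [degree_eq_natDegree hr0, Nat.cast_lt] at hr
  exact degree_le_natDegree.trans_lt (Nat.cast_lt.2 (natDegree_mul_le.trans_lt (by omega)))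

noncomputable def ofFnRev (n : ℕ) : (Fin n → R) →ₗ[R] R[X] :=
  Fintype.linearCombination R fun j : Fin n => X ^ (n - 1 - j : ℕ)

theorem ofFnRev_apply {n : ℕ} (v : Fin n → R) : ofFnRev n v = ∑ j, v j • X ^ (n - 1 - j : ℕ) :=
  Fintype.linearCombination_apply _ _ _

theorem coeff_ofFnRev {n : ℕ} (v : Fin n → R) (i : ℕ) :
    (ofFnRev n v).coeff i = if h : i < n then v ⟨n - 1 - i, by omega⟩ else 0 := by
  simp only [ofFnRev_apply, finsetSum_coeff, coeff_smul, coeff_X_pow, smul_eq_mul, mul_ite,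
    mul_one, mul_zero]
  split_ifs with h
  · rw [Finset.sum_eq_single ⟨n - 1 - i, by omega⟩]
    · simp [show n - 1 - (n - 1 - i) = i by omega]
    · intro j _ hj
      rw [if_neg]
      exact fun hij => hj (Fin.ext (by have := j.isLt; dsimp only; omega))
    · simp
  · exact Finset.sum_eq_zero fun j _ => if_neg (by omega)

theorem exists_ofFnRev_eq {n : ℕ} {p : R[X]} (hp : p.degree < n) : ∃ v, ofFnRev n v = p := by
  refine ⟨fun j => p.coeff (n - 1 - j), ?_⟩
  ext i
  rw [coeff_ofFnRev]
  split_ifs with hi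
  · simp [show n - 1 - (n - 1 - i) = i by omega]
  · exact ((degree_lt_iff_coeff_zero p n).1 hp i (not_lt.1 hi)).symm

section IsDomain

variable [IsDomain R]

theorem natDegree_add_natDegree_lt {x r : R[X]} {N : ℕ} (hr0 : r ≠ 0)
    (hxr : (x * r).degree < N) (hr : r.degree < N) : x.natDegree + r.natDegree < N := by
  rcases eq_or_ne x 0 with rfl | hx
  · simpa [natDegree_lt_iff_degree_lt hr0] using hr
  · rwa [← natDegree_mul hx hr0, natDegree_lt_iff_degree_lt (mul_ne_zero hx hr0)]

theorem max_natDegree_mul_left {d a b : R[X]} (hd : d ≠ 0) (hab : a ≠ 0 ∨ b ≠ 0) :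
    max (d * a).natDegree (d * b).natDegree = d.natDegree + max a.natDegree b.natDegree := by
  rcases eq_or_ne a 0 with rfl | ha <;> rcases eq_or_ne b 0 with rfl | hb <;>
    simp_all [natDegree_mul hd]

theorem mul_modByMonic_comm_iff {a b r μ : R[X]} (hμ : μ.Monic) (hab : IsCoprime a b)
    (hr : r.degree < μ.degree) :
    a * (b * r %ₘ μ) = b * (a * r %ₘ μ) ↔
      r.degree < ↑(μ.natDegree - max a.natDegree b.natDegree) := by
  have hμN : μ.degree = μ.natDegree := degree_eq_natDegree hμ.ne_zero
  constructor
  · intro h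
    obtain ⟨c, hac, hbc⟩ := hab.exists_eq_mul_of_mul_eq_mul h
    have hc : c.degree < μ.degree := by
      rcases hab.ne_zero_or_ne_zero with ha | hb
      · exact ((degree_le_mul_left c ha).trans_eq (by rw [mul_comm, ← hac])).trans_lt
          (degree_modByMonic_lt _ hμ)
      · exact ((degree_le_mul_left c hb).trans_eq (by rw [mul_comm, ← hbc])).trans_lt
          (degree_modByMonic_lt _ hμ)
    have hμrc : μ ∣ r - c := by
      refine hab.dvd_of_dvd_mul_of_dvd_mul ?_ ?_
      · rw [mul_sub, ← hac, ← dvd_neg, neg_sub]; exact dvd_modByMonic_sub _ _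
      · rw [mul_sub, ← hbc, ← dvd_neg, neg_sub]; exact dvd_modByMonic_sub _ _
    obtain rfl : r = c := sub_eq_zero.1 <|
      eq_zero_of_dvd_of_degree_lt hμrc ((degree_sub_le r c).trans_lt (max_lt hr hc))
    rcases eq_or_ne r 0 with rfl | hr0
    · simp
    have har := degree_modByMonic_lt (a * r) hμ
    have hbr := degree_modByMonic_lt (b * r) hμ
    rw [hac, hμN] at har
    rw [hbc, hμN] at hbr
    rw [hμN] at hr
    have ha := natDegree_add_natDegree_lt hr0 har hr
    have hb := natDegree_add_natDegree_lt hr0 hbr hr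
    rw [degree_eq_natDegree hr0, Nat.cast_lt]
    omega
  · intro h
    rw [(modByMonic_eq_self_iff hμ).2, (modByMonic_eq_self_iff hμ).2, mul_left_comm]
    all_goals rw [hμN]
    · exact degree_mul_lt_of_natDegree_le (le_max_left _ _) h
    · exact degree_mul_lt_of_natDegree_le (le_max_right _ _) h

theorem mul_mul_modByMonic_comm_iff {d a b μ : R[X]} (hμ : μ.Monic) (hd : d ≠ 0)
    (hab : IsCoprime a b) (q : R[X]) :
    d * a * (d * b * q %ₘ μ) = d * b * (d * a * q %ₘ μ) ↔
      (d * q %ₘ μ).degree < ↑(μ.natDegree - max a.natDegree b.natDegree) := by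
  have hq : ∀ x, d * x * q %ₘ μ = x * (d * q %ₘ μ) %ₘ μ := fun x => by
    rw [mul_modByMonic_modByMonic _ _ hμ, mul_left_comm, mul_assoc]
  rw [hq a, hq b, mul_assoc, mul_assoc, mul_right_inj' hd]
  exact mul_modByMonic_comm_iff hμ hab (degree_modByMonic_lt _ hμ)

theorem eq_zero_of_coeff_mul_eq_zero {d s : R[X]} {k : ℕ} (hd : d ≠ 0) (hs : s.degree < k)
    (h : ∀ b : Fin k, (d * s).coeff (d.natDegree + b) = 0) : s = 0 := by
  by_contra hs0
  have hsk : s.natDegree < k := (natDegree_lt_iff_degree_lt hs0).2 hs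
  have := h ⟨_, hsk⟩
  rw [← natDegree_mul hd hs0, coeff_natDegree, leadingCoeff_eq_zero] at this
  exact mul_ne_zero hd hs0 this

end IsDomain

variable {K : Type*} [Field K]

theorem exists_degree_lt_coeff_mul_eq {d : K[X]} (hd : d ≠ 0) {n k : ℕ}
    (hk : d.natDegree + k ≤ n) (w : Fin k → K) :
    ∃ p : K[X], p.degree < n ∧ ∀ b : Fin k, (d * p).coeff (n - k + b) = w b := by
  let T : degreeLT K k →ₗ[K] Fin k → K := LinearMap.pi fun b =>
    lcoeff K (d.natDegree + b) ∘ₗ LinearMap.mulLeft K d ∘ₗ (degreeLT K k).subtype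
  have hT : Function.Injective T := by
    rw [← LinearMap.ker_eq_bot, LinearMap.ker_eq_bot']
    exact fun s hs => Subtype.ext <|
      eq_zero_of_coeff_mul_eq_zero hd (mem_degreeLT.1 s.2) fun b => congrFun hs b
  obtain ⟨⟨s, hsk⟩, hs⟩ := (LinearMap.injective_iff_surjective_of_finrank_eq_finrank
    (by simp [(degreeLTEquiv K k).finrank_eq])).1 hT w
  refine ⟨X ^ (n - k - d.natDegree) * s, ?_, fun b => ?_⟩
  · exact degree_mul_lt_of_natDegree_le (natDegree_X_pow_le _)
      ((mem_degreeLT.1 hsk).trans_le (Nat.cast_le.2 (by omega)))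
  · calc (d * (X ^ (n - k - d.natDegree) * s)).coeff (n - k + b)
        = (d * s * X ^ (n - k - d.natDegree)).coeff (d.natDegree + b + (n - k - d.natDegree)) := by
          congr 1 <;> first | omega | ring
      _ = w b := by rw [coeff_mul_X_pow, ← hs]; rfl

noncomputable def coeffWindow (d : K[X]) (n k : ℕ) : (Fin n → K) →ₗ[K] Fin k → K :=
  LinearMap.pi fun b => lcoeff K (n - k + b) ∘ₗ LinearMap.mulLeft K d ∘ₗ ofFnRev n

theorem coeffWindow_apply (d : K[X]) {n k : ℕ} (v : Fin n → K) (b : Fin k) :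
    coeffWindow d n k v b = (d * ofFnRev n v).coeff (n - k + b) :=
  rfl

theorem finrank_ker_coeffWindow {d : K[X]} (hd : d ≠ 0) {n k : ℕ} (hk : d.natDegree + k ≤ n) :
    Module.finrank K (LinearMap.ker (coeffWindow d n k)) = n - k := by
  have hsurj : Function.Surjective (coeffWindow d n k) := fun w => by
    obtain ⟨p, hp, hpw⟩ := exists_degree_lt_coeff_mul_eq hd hk w
    obtain ⟨v, rfl⟩ := exists_ofFnRev_eq hp
    exact ⟨v, _root_.funext hpw⟩
  have := LinearMap.finrank_range_add_finrank_ker (coeffWindow d n k)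
  rw [LinearMap.range_eq_top.2 hsurj, finrank_top, Module.finrank_fin_fun,
    Module.finrank_fin_fun] at this
  omega

end Polynomial

section Bezoutian

variable {n : ℕ}

theorem Tp_mulVec_apply (b : ℂ[X]) (v : Fin n → ℂ) (l : Fin n) :
    (Tp n b *ᵥ v) l = (b * ofFnRev n v).coeff (n - 1 - l) := by
  simp only [mulVec, dotProduct, Tp, of_apply, ofFnRev_apply, Finset.mul_sum, finsetSum_coeff,
    mul_smul_comm, coeff_smul, coeff_mul_X_pow', smul_eq_mul]
  refine Finset.sum_congr rfl fun k _ => ?_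
  have := l.isLt; have := k.isLt
  by_cases hlk : (l : ℕ) ≤ k
  · rw [if_pos hlk, if_pos (by omega), show n - 1 - l - (n - 1 - k) = k - l by omega, mul_comm]
  · rw [if_neg hlk, if_neg (by omega), zero_mul, mul_zero]

theorem Hk_mulVec_apply (a : ℂ[X]) (u : Fin n → ℂ) (j : Fin n) :
    (Hk n a *ᵥ u) j = (a * ofFnRev n u).coeff (n + j) := by
  simp only [mulVec, dotProduct, Hk, of_apply, ofFnRev_apply, Finset.mul_sum, finsetSum_coeff,
    mul_smul_comm, coeff_smul, coeff_mul_X_pow', smul_eq_mul]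
  refine Finset.sum_congr rfl fun l _ => ?_
  have := l.isLt
  rw [if_pos (by omega), show n + j - (n - 1 - l) = j + l + 1 by omega, mul_comm]

theorem ofFnRev_Tp_mulVec (b : ℂ[X]) (v : Fin n → ℂ) :
    ofFnRev n (Tp n b *ᵥ v) = b * ofFnRev n v %ₘ X ^ n := by
  ext i
  rw [coeff_ofFnRev, coeff_modByMonic_X_pow]
  split_ifs with hi
  · rw [Tp_mulVec_apply]; congr 1; rw [Fin.val_mk]; omega
  · rfl

theorem Bz_mulVec_apply (f g : ℂ[X]) (v : Fin n → ℂ) (j : Fin n) :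
    (Bz n f g *ᵥ v) j =
      (f * (g * ofFnRev n v %ₘ X ^ n) - g * (f * ofFnRev n v %ₘ X ^ n)).coeff (n + j) := by
  rw [Bz, sub_mulVec, ← mulVec_mulVec, ← mulVec_mulVec, Pi.sub_apply, Hk_mulVec_apply,
    Hk_mulVec_apply, ofFnRev_Tp_mulVec, ofFnRev_Tp_mulVec, coeff_sub]

theorem Bz_mulVec_eq_zero_iff {f g : ℂ[X]} (hf : f.natDegree ≤ n) (hg : g.natDegree ≤ n)
    (v : Fin n → ℂ) :
    Bz n f g *ᵥ v = 0 ↔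
      f * (g * ofFnRev n v %ₘ X ^ n) = g * (f * ofFnRev n v %ₘ X ^ n) := by
  set q := ofFnRev n v
  set D := f * (g * q %ₘ X ^ n) - g * (f * q %ₘ X ^ n)
  have hlow : X ^ n ∣ D := by
    have : D = f * (g * q %ₘ X ^ n - g * q) - g * (f * q %ₘ X ^ n - f * q) := by ring
    rw [this]
    exact dvd_sub ((dvd_modByMonic_sub _ _).mul_left f) ((dvd_modByMonic_sub _ _).mul_left g)
  have hmod : ∀ p : ℂ[X], (p %ₘ X ^ n).degree < ↑(n + n - n) := fun p => by
    simpa using degree_modByMonic_lt p (monic_X_pow n)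
  have hhigh : D.degree < ↑(n + n) := (degree_sub_le _ _).trans_lt
    (max_lt (degree_mul_lt_of_natDegree_le hf (hmod _))
      (degree_mul_lt_of_natDegree_le hg (hmod _)))
  rw [funext_iff, ← sub_eq_zero (a := f * _), Polynomial.ext_iff]
  simp only [Bz_mulVec_apply, Pi.zero_apply, coeff_zero]
  refine ⟨fun h i => ?_, fun h j => h _⟩
  by_cases hin : i < n
  · exact X_pow_dvd_iff.1 hlow i hin
  by_cases hi2n : i < n + n
  · simpa [show n + (i - n) = i by omega] using h ⟨i - n, by omega⟩
  · exact coeff_eq_zero_of_degree_lt (hhigh.trans_le (Nat.cast_le.2 (not_lt.1 hi2n)))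

theorem ker_toLin'_Bz_mul_eq {d a b : ℂ[X]} (hd : d ≠ 0) (hab : IsCoprime a b)
    (hn : d.natDegree + max a.natDegree b.natDegree ≤ n) :
    LinearMap.ker (toLin' (Bz n (d * a) (d * b))) =
      LinearMap.ker (coeffWindow d n (max a.natDegree b.natDegree)) := by
  ext v
  rw [LinearMap.mem_ker, LinearMap.mem_ker, toLin'_apply,
    Bz_mulVec_eq_zero_iff (natDegree_mul_le.trans (by omega)) (natDegree_mul_le.trans (by omega)),
    mul_mul_modByMonic_comm_iff (monic_X_pow n) hd hab, natDegree_X_pow,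
    degree_modByMonic_X_pow_lt_iff _ (by omega), funext_iff]
  simp only [coeffWindow_apply, Pi.zero_apply]

end Bezoutian

/-- For `n ≥ m = max(deg f, deg g)`, the nullity of the `n × n` Bezoutian matrix of
`f` and `g` equals `n - m + deg gcd(f, g)`. -/
theorem bezoutian_nullity_general (f g : ℂ[X]) (hfg : f ≠ 0 ∨ g ≠ 0)
    (m : ℕ) (hm : m = max f.natDegree g.natDegree) (n : ℕ) (hn : m ≤ n) :
    Module.finrank ℂ (LinearMap.ker (Matrix.toLin' (Bz n f g))) =
      n - m + (EuclideanDomain.gcd f g).natDegree := by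
  have hd : EuclideanDomain.gcd f g ≠ 0 := fun h => by
    rw [EuclideanDomain.gcd_eq_zero_iff] at h
    tauto
  obtain ⟨f₁, g₁, hf, hg, hcop⟩ := EuclideanDomain.exists_eq_gcd_mul_isCoprime hd
  generalize EuclideanDomain.gcd f g = d at hd hf hg ⊢
  subst hf hg
  have hmk : m = d.natDegree + max f₁.natDegree g₁.natDegree := by
    rw [hm, max_natDegree_mul_left hd hcop.ne_zero_or_ne_zero]
  rw [ker_toLin'_Bz_mul_eq hd hcop (hmk ▸ hn), finrank_ker_coeffWindow hd (hmk ▸ hn)]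
  omega
end

section
/- Let f, g ∈ ℂ[z] be nonzero polynomials with n = max(deg f, deg g) ≥ 1, and let B = H_f·T_g − H_g·T_f be the n×n Bezoutian matrix. Then det B = 0 if and only if f and g have a common zero in ℂ. -/
open Polynomial Matrix

open Finset

section Lemmas

lemma tp_mul_tp (n : ℕ) (f g : ℂ[X]) : Tp n f * Tp n g = Tp n (f * g) := by
  ext j k
  simp only [Tp, Matrix.mul_apply, Matrix.of_apply]
  rw [Fin.sum_univ_eq_sum_range (fun m => (if (j:ℕ) ≤ m then f.coeff (m - j) else 0) *
    (if m ≤ (k:ℕ) then g.coeff ((k:ℕ) - m) else 0))]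
  by_cases hjk : (j:ℕ) ≤ (k:ℕ)
  · rw [if_pos hjk, coeff_mul, Finset.Nat.sum_antidiagonal_eq_sum_range_succ
      (fun a b => f.coeff a * g.coeff b)]
    have hsub : Finset.Ico (j:ℕ) ((k:ℕ)+1) ⊆ Finset.range n := by
      intro m hm
      simp only [Finset.mem_Ico] at hm
      simp only [Finset.mem_range]
      omega
    rw [← Finset.sum_subset hsub (by
      intro m hm hnot
      simp only [Finset.mem_Ico] at hnot
      split_ifs with h1 h2 <;> first | omega | ring)]
    rw [Finset.sum_Ico_eq_sum_range]
    rw [show (k:ℕ)+1-(j:ℕ) = ((k:ℕ)-(j:ℕ)).succ by omega]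
    apply Finset.sum_congr rfl
    intro i hi
    simp only [Finset.mem_range, Nat.succ_eq_add_one] at hi
    rw [if_pos (by omega), if_pos (by omega),
      show (j:ℕ)+i-(j:ℕ) = i by omega, show (k:ℕ)-((j:ℕ)+i) = (k:ℕ)-(j:ℕ)-i by omega]
  · rw [if_neg hjk]
    apply Finset.sum_eq_zero
    intro m _
    split_ifs with h1 h2 <;> first | omega | ring

lemma hk_symm (n : ℕ) (f : ℂ[X]) : (Hk n f)ᵀ = Hk n f := by
  ext j k
  simp only [Hk, Matrix.transpose_apply, Matrix.of_apply]
  ring_nf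

lemma rv_mul_rv (n : ℕ) (hn : 1 ≤ n) : Rv n * Rv n = 1 := by
  ext j k
  have hj := j.isLt
  have hk := k.isLt
  simp only [Rv, Matrix.mul_apply, Matrix.of_apply, Matrix.one_apply]
  rw [Finset.sum_eq_single (⟨n - 1 - (j:ℕ), by omega⟩ : Fin n)]
  · simp only [Fin.val_mk]
    rw [if_pos (by omega)]
    rw [one_mul]
    by_cases hjk : j = k
    · subst hjk
      rw [if_pos (by omega), if_pos rfl]
    · rw [if_neg (fun hc => hjk (Fin.ext (by omega))), if_neg hjk]
  · intro b _ hb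
    rw [if_neg, zero_mul]
    intro hc
    exact hb (Fin.ext (by simp only [Fin.val_mk]; omega))
  · simp

lemma tp_mul_rv (n : ℕ) (hn : 1 ≤ n) (f : ℂ[X]) :
    Tp n f * Rv n = Rv n * (Tp n f)ᵀ := by
  ext j k
  have hj := j.isLt
  have hk := k.isLt
  simp only [Tp, Rv, Matrix.mul_apply, Matrix.of_apply, Matrix.transpose_apply]
  rw [Finset.sum_eq_single (⟨n - 1 - (k:ℕ), by omega⟩ : Fin n),
      Finset.sum_eq_single (⟨n - 1 - (j:ℕ), by omega⟩ : Fin n)]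
  · simp only [Fin.val_mk]
    rw [if_pos (show (n-1-(k:ℕ))+(k:ℕ) = n-1 by omega), mul_one,
        if_pos (show (j:ℕ)+(n-1-(j:ℕ)) = n-1 by omega), one_mul]
    by_cases h : (j:ℕ) + (k:ℕ) ≤ n - 1
    · rw [if_pos (by omega), if_pos (by omega)]
      congr 1
      omega
    · rw [if_neg (by omega), if_neg (by omega)]
  · intro b _ hb
    have hz : (if (j:ℕ) + (b:ℕ) = n - 1 then (1:ℂ) else 0) = 0 :=
      if_neg (fun hc => hb (Fin.ext (by simp only [Fin.val_mk]; omega)))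
    rw [hz, zero_mul]
  · simp
  · intro b _ hb
    have hz : (if (b:ℕ) + (k:ℕ) = n - 1 then (1:ℂ) else 0) = 0 :=
      if_neg (fun hc => hb (Fin.ext (by simp only [Fin.val_mk]; omega)))
    rw [hz, mul_zero]
  · simp

lemma rv_hk_apply (n : ℕ) (hn : 1 ≤ n) (f : ℂ[X]) (j k : Fin n) :
    (Rv n * Hk n f) j k = f.coeff (n + (k:ℕ) - (j:ℕ)) := by
  have hj := j.isLt
  simp only [Rv, Hk, Matrix.mul_apply, Matrix.of_apply]
  rw [Finset.sum_eq_single (⟨n - 1 - (j:ℕ), by omega⟩ : Fin n)]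
  · rw [if_pos (by simp only [Fin.val_mk]; omega), one_mul]
    congr 1
    simp only [Fin.val_mk]
    omega
  · intro b _ hb
    rw [if_neg, zero_mul]
    intro hc; exact hb (Fin.ext (by simp only [Fin.val_mk]; omega))
  · simp

lemma det_tp (n : ℕ) (g : ℂ[X]) : (Tp n g).det = g.coeff 0 ^ n := by
  rw [Matrix.det_of_upperTriangular (by
    intro i j hij
    simp only [Tp, Matrix.of_apply, id] at *
    rw [if_neg (by exact fun h => absurd (Fin.le_def.mpr h) (not_le.mpr hij))])]
  simp [Tp, Finset.prod_const]

/-- the polynomial with coefficients `c`. -/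
noncomputable def vp (n : ℕ) (c : Fin n → ℂ) : ℂ[X] :=
  ∑ j : Fin n, C (c j) * X ^ (j : ℕ)

lemma vp_coeff (n : ℕ) (c : Fin n → ℂ) (i : ℕ) :
    (vp n c).coeff i = if h : i < n then c ⟨i, h⟩ else 0 := by
  rw [vp, finset_sum_coeff]
  by_cases h : i < n
  · rw [dif_pos h, Finset.sum_eq_single (⟨i, h⟩ : Fin n)]
    · simp
    · intro b _ hb
      rw [coeff_C_mul, coeff_X_pow, if_neg (fun hc => hb (Fin.ext (by simp [hc]))), mul_zero]
    · simp
  · rw [dif_neg h]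
    apply Finset.sum_eq_zero
    intro b _
    rw [coeff_C_mul, coeff_X_pow, if_neg (by omega : ¬ i = (b:ℕ)), mul_zero]

lemma vp_natDegree_lt (n : ℕ) (hn : 1 ≤ n) (c : Fin n → ℂ) : (vp n c).natDegree < n := by
  have h : (vp n c).natDegree ≤ n - 1 := by
    apply Polynomial.natDegree_sum_le_of_forall_le
    intro j _
    apply le_trans (natDegree_C_mul_le _ _)
    simpa using Nat.le_of_lt_succ (by omega : (j:ℕ) < n - 1 + 1)
  omega

lemma vp_eq_self (n : ℕ) (a : ℂ[X]) (ha : a.natDegree < n) :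
    vp n (fun j => a.coeff (j : ℕ)) = a := by
  conv_rhs => rw [Polynomial.as_sum_range' a n ha]
  rw [vp, Fin.sum_univ_eq_sum_range (fun j => C (a.coeff j) * X ^ j)]
  exact Finset.sum_congr rfl fun i _ => C_mul_X_pow_eq_monomial

lemma mul_coeff_vec (n : ℕ) (c : Fin n → ℂ) (f : ℂ[X]) (t : ℕ) :
    (vp n c * f).coeff t
      = ∑ j : Fin n, c j * (if (j:ℕ) ≤ t then f.coeff (t - (j:ℕ)) else 0) := by
  rw [vp, Finset.sum_mul, finset_sum_coeff]
  apply Finset.sum_congr rfl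
  intro j _
  rw [show Polynomial.C (c j) * X ^ (j:ℕ) * f = Polynomial.C (c j) * f * X ^ (j:ℕ) by ring,
    coeff_mul_X_pow', mul_ite, mul_zero]
  congr 1
  rw [coeff_C_mul]

lemma vecMul_rs (n : ℕ) (hn : 1 ≤ n) (f g : ℂ[X]) (v : Fin n ⊕ Fin n → ℂ)
    (s : Fin n ⊕ Fin n) :
    (v ᵥ* Rs n f g) s =
      ((vp n (v ∘ Sum.inl)) * f + (vp n (v ∘ Sum.inr)) * g).coeff
        (Sum.elim (fun k : Fin n => (k : ℕ)) (fun k : Fin n => n + (k : ℕ)) s) := by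
  rw [Matrix.vecMul, dotProduct, Fintype.sum_sum_type, coeff_add]
  cases s with
  | inl k =>
    simp only [Sum.elim_inl]
    rw [mul_coeff_vec, mul_coeff_vec]
    congr 1 <;>
    · apply Finset.sum_congr rfl
      intro j _
      rfl
  | inr k =>
    simp only [Sum.elim_inr]
    rw [mul_coeff_vec, mul_coeff_vec]
    congr 1 <;>
    · apply Finset.sum_congr rfl
      intro j _
      rw [show (Rs n f g) _ (Sum.inr k) = _ from rfl]
      simp only [Rs, Matrix.fromBlocks_apply₁₂, Matrix.fromBlocks_apply₂₂]
      rw [rv_hk_apply n hn _ j k, if_pos (by omega : (j:ℕ) ≤ n + (k:ℕ))]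
      rfl

lemma det_rs_eq_zero_iff (f g : ℂ[X]) (n : ℕ) (hn1 : 1 ≤ n)
    (hfd : f.natDegree ≤ n) (hgd : g.natDegree ≤ n) :
    (Rs n f g).det = 0 ↔
      ∃ a b : ℂ[X], (a ≠ 0 ∨ b ≠ 0) ∧ a.natDegree < n ∧ b.natDegree < n ∧
        a * f + b * g = 0 := by
  rw [← Matrix.exists_vecMul_eq_zero_iff]
  constructor
  · rintro ⟨v, hv, hvm⟩
    refine ⟨vp n (v ∘ Sum.inl), vp n (v ∘ Sum.inr), ?_, vp_natDegree_lt n hn1 _,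
      vp_natDegree_lt n hn1 _, ?_⟩
    · by_contra hc
      push_neg at hc
      apply hv
      funext s
      have h1 : ∀ j : Fin n, v (Sum.inl j) = 0 := by
        intro j
        have := congrArg (fun p => p.coeff (j:ℕ)) hc.1
        simpa [vp_coeff, j.isLt] using this
      have h2 : ∀ j : Fin n, v (Sum.inr j) = 0 := by
        intro j
        have := congrArg (fun p => p.coeff (j:ℕ)) hc.2
        simpa [vp_coeff, j.isLt] using this
      cases s with
      | inl j => exact h1 j
      | inr j => exact h2 j
    · -- all coefficients vanish
      apply Polynomial.ext
      intro t
      rw [coeff_zero]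
      by_cases ht : t < 2 * n
      · by_cases ht1 : t < n
        · have := congrFun hvm (Sum.inl ⟨t, ht1⟩)
          rwa [vecMul_rs n hn1 f g v, Sum.elim_inl] at this
        · have := congrFun hvm (Sum.inr ⟨t - n, by omega⟩)
          rw [vecMul_rs n hn1 f g v, Sum.elim_inr] at this
          rw [show n + (t - n) = t by omega] at this
          exact this
      · apply coeff_eq_zero_of_natDegree_lt
        apply lt_of_le_of_lt (natDegree_add_le _ _)
        apply lt_of_le_of_lt (max_le_max (natDegree_mul_le) (natDegree_mul_le))
        have h1 := vp_natDegree_lt n hn1 (v ∘ Sum.inl)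
        have h2 := vp_natDegree_lt n hn1 (v ∘ Sum.inr)
        simp only [max_lt_iff]
        omega
  · rintro ⟨a, b, hab, hda, hdb, heq⟩
    refine ⟨Sum.elim (fun j => a.coeff (j:ℕ)) (fun j => b.coeff (j:ℕ)), ?_, ?_⟩
    · intro hc
      rcases hab with h | h <;> apply h <;> apply Polynomial.ext <;> intro i <;>
        rw [coeff_zero] <;> by_cases hi : i < n
      · exact congrFun hc (Sum.inl ⟨i, hi⟩)
      · exact coeff_eq_zero_of_natDegree_lt (by omega)
      · exact congrFun hc (Sum.inr ⟨i, hi⟩)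
      · exact coeff_eq_zero_of_natDegree_lt (by omega)
    · funext s
      rw [vecMul_rs n hn1 f g _ s]
      have hva : vp n ((Sum.elim (fun j : Fin n => a.coeff (j:ℕ))
          (fun j : Fin n => b.coeff (j:ℕ))) ∘ Sum.inl) = a := vp_eq_self n a hda
      have hvb : vp n ((Sum.elim (fun j : Fin n => a.coeff (j:ℕ))
          (fun j : Fin n => b.coeff (j:ℕ))) ∘ Sum.inr) = b := vp_eq_self n b hdb
      rw [hva, hvb, heq, coeff_zero]
      rfl

lemma common_root_iff_not_coprime (f g : ℂ[X]) (hf : f ≠ 0) :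
    (∃ z : ℂ, f.eval z = 0 ∧ g.eval z = 0) ↔ ¬ IsCoprime f g := by
  constructor
  · rintro ⟨z, hfz, hgz⟩ ⟨u, v, huv⟩
    have := congrArg (Polynomial.eval z) huv
    simp [hfz, hgz] at this
  · intro hnc
    set d := EuclideanDomain.gcd f g with hd
    have hdu : ¬ IsUnit d := fun h => hnc (EuclideanDomain.gcd_isUnit_iff.mp h)
    have hd0 : d ≠ 0 := fun h => hf (EuclideanDomain.gcd_eq_zero_iff.mp h).1
    have hdeg : 0 < d.natDegree := by
      by_contra h
      push_neg at h
      obtain ⟨c, hc⟩ := Polynomial.natDegree_eq_zero.mp (Nat.le_zero.mp h)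
      exact hdu (hc ▸ isUnit_C.mpr (isUnit_iff_ne_zero.mpr
        (fun h0 => hd0 (by rw [← hc, h0, map_zero]))))
    obtain ⟨z, hz⟩ := Complex.exists_root
      (Polynomial.natDegree_pos_iff_degree_pos.mp hdeg)
    have hzd : d.eval z = 0 := hz
    obtain ⟨q1, hq1⟩ := EuclideanDomain.gcd_dvd_left f g
    obtain ⟨q2, hq2⟩ := EuclideanDomain.gcd_dvd_right f g
    exact ⟨z, by rw [hq1, eval_mul, hzd, zero_mul],
      by rw [hq2, eval_mul, hzd, zero_mul]⟩

lemma not_coprime_iff_exists (f g : ℂ[X]) (hf : f ≠ 0) (hg : g ≠ 0)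
    (n : ℕ) (hn : n = max f.natDegree g.natDegree) :
    ¬ IsCoprime f g ↔
      ∃ a b : ℂ[X], (a ≠ 0 ∨ b ≠ 0) ∧ a.natDegree < n ∧ b.natDegree < n ∧
        a * f + b * g = 0 := by
  constructor
  · intro hnc
    set d := EuclideanDomain.gcd f g with hd
    have hdu : ¬ IsUnit d := fun h => hnc (EuclideanDomain.gcd_isUnit_iff.mp h)
    have hd0 : d ≠ 0 := fun h => hf (EuclideanDomain.gcd_eq_zero_iff.mp h).1
    have hdeg : 0 < d.natDegree := by
      by_contra h
      push_neg at h
      obtain ⟨c, hc⟩ := Polynomial.natDegree_eq_zero.mp (Nat.le_zero.mp h)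
      exact hdu (hc ▸ isUnit_C.mpr (isUnit_iff_ne_zero.mpr
        (fun h0 => hd0 (by rw [← hc, h0, map_zero]))))
    obtain ⟨q1, hq1⟩ := EuclideanDomain.gcd_dvd_left f g
    obtain ⟨q2, hq2⟩ := EuclideanDomain.gcd_dvd_right f g
    have hq10 : q1 ≠ 0 := fun h => hf (by rw [hq1, h, mul_zero])
    have hq20 : q2 ≠ 0 := fun h => hg (by rw [hq2, h, mul_zero])
    refine ⟨q2, -q1, Or.inl hq20, ?_, ?_, ?_⟩
    · have := Polynomial.natDegree_mul hd0 hq20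
      rw [← hq2] at this
      omega
    · rw [natDegree_neg]
      have := Polynomial.natDegree_mul hd0 hq10
      rw [← hq1] at this
      omega
    · linear_combination q2 * hq1 - q1 * hq2
  · rintro ⟨a, b, hab, hda, hdb, heq⟩ hcop
    have hba : b * g = -(a * f) := by linear_combination heq
    have ha0 : a ≠ 0 := by
      intro h
      rw [h, zero_mul, zero_add, mul_eq_zero] at heq
      rcases hab with h' | h'
      · exact h' h
      · rcases heq with h'' | h''
        · exact h' h''
        · exact hg h''
    have hb0 : b ≠ 0 := by
      intro h
      rw [h, zero_mul, add_zero, mul_eq_zero] at heq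
      rcases heq with h'' | h''
      · exact ha0 h''
      · exact hf h''
    have hfb : f ∣ b := by
      have hdvd : f ∣ b * g := ⟨-a, by linear_combination heq⟩
      exact hcop.dvd_of_dvd_mul_right hdvd
    have hga : g ∣ a := by
      have hdvd : g ∣ a * f := ⟨-b, by linear_combination heq⟩
      exact hcop.symm.dvd_of_dvd_mul_right hdvd
    have h1 : f.natDegree ≤ b.natDegree := Polynomial.natDegree_le_of_dvd hfb hb0
    have h2 : g.natDegree ≤ a.natDegree := Polynomial.natDegree_le_of_dvd hga ha0
    omega

lemma hk_transpose_apply : True := trivial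

/-- generic block determinant criterion -/
lemma det_fromBlocks_zero11_eq_zero_iff {n : ℕ} (A C D : Matrix (Fin n) (Fin n) ℂ)
    (hC : IsUnit C.det) :
    (Matrix.fromBlocks 0 A C D).det = 0 ↔ A.det = 0 := by
  rw [← Matrix.exists_mulVec_eq_zero_iff, ← Matrix.exists_mulVec_eq_zero_iff]
  constructor
  · rintro ⟨w, hw, hmw⟩
    rw [show w = Sum.elim (w ∘ Sum.inl) (w ∘ Sum.inr) from funext fun s => by cases s <;> rfl,
      Matrix.fromBlocks_mulVec] at hmw
    have h1 : A *ᵥ (w ∘ Sum.inr) = 0 := by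
      funext i
      have := congrFun hmw (Sum.inl i)
      simpa using this
    have h2 : C *ᵥ (w ∘ Sum.inl) + D *ᵥ (w ∘ Sum.inr) = 0 := by
      funext i
      have := congrFun hmw (Sum.inr i)
      simpa using this
    refine ⟨w ∘ Sum.inr, ?_, h1⟩
    intro hy
    apply hw
    have hx : C *ᵥ (w ∘ Sum.inl) = 0 := by
      rw [hy] at h2
      simpa using h2
    have hx0 : w ∘ Sum.inl = 0 := by
      have := congrArg (fun u => C⁻¹ *ᵥ u) hx
      simpa [Matrix.mulVec_mulVec, Matrix.nonsing_inv_mul C hC] using this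
    funext s
    cases s with
    | inl i => exact congrFun hx0 i
    | inr i => exact congrFun hy i
  · rintro ⟨y, hy, hAy⟩
    refine ⟨Sum.elim (C⁻¹ *ᵥ (-(D *ᵥ y))) y, ?_, ?_⟩
    · intro hc
      apply hy
      funext i
      exact congrFun hc (Sum.inr i)
    · rw [Matrix.fromBlocks_mulVec]
      funext s
      cases s with
      | inl i =>
        simp [Sum.elim_comp_inl, Sum.elim_comp_inr, Matrix.zero_mulVec, hAy]
      | inr i =>
        simp [Sum.elim_comp_inl, Sum.elim_comp_inr, Matrix.mulVec_mulVec,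
          Matrix.mul_nonsing_inv C hC]

/-- the key block identity `U * R`. -/
lemma block_identity (n : ℕ) (hn : 1 ≤ n) (f g : ℂ[X]) :
    Matrix.fromBlocks (Tp n g) (-(Tp n f)) 0 1 * Rs n f g =
      Matrix.fromBlocks 0 (Rv n * (Bz n f g)ᵀ) (Tp n g) (Rv n * Hk n g) := by
  rw [Rs, Matrix.fromBlocks_multiply]
  have h11 : Tp n g * Tp n f + -Tp n f * Tp n g = 0 := by
    rw [Matrix.neg_mul, tp_mul_tp, tp_mul_tp, mul_comm f g, add_neg_cancel]
  have h12 : Tp n g * (Rv n * Hk n f) + -Tp n f * (Rv n * Hk n g)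
      = Rv n * (Bz n f g)ᵀ := by
    conv_rhs => rw [Bz, transpose_sub, transpose_mul, transpose_mul, hk_symm, hk_symm,
      Matrix.mul_sub, ← Matrix.mul_assoc, ← Matrix.mul_assoc,
      ← tp_mul_rv n hn g, ← tp_mul_rv n hn f,
      Matrix.mul_assoc, Matrix.mul_assoc]
    rw [Matrix.neg_mul, ← sub_eq_add_neg]
  have h21 : (0 : Matrix (Fin n) (Fin n) ℂ) * Tp n f + 1 * Tp n g = Tp n g := by
    rw [Matrix.zero_mul, Matrix.one_mul, zero_add]
  have h22 : (0 : Matrix (Fin n) (Fin n) ℂ) * (Rv n * Hk n f) + 1 * (Rv n * Hk n g)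
      = Rv n * Hk n g := by
    rw [Matrix.zero_mul, Matrix.one_mul, zero_add]
  rw [h11, h12, h21, h22]

lemma hk_tp_row0 (n : ℕ) (hn1 : 1 ≤ n) (f g : ℂ[X]) (hf0 : f.coeff 0 = 0) (k : Fin n) :
    (Hk n f * Tp n g) ⟨0, hn1⟩ k = (f * g).coeff ((k : ℕ) + 1) := by
  have hk := k.isLt
  simp only [Hk, Tp, Matrix.mul_apply, Matrix.of_apply, Fin.val_mk, Nat.zero_add]
  rw [Fin.sum_univ_eq_sum_range (fun m => f.coeff (m + 1) *
    (if m ≤ (k:ℕ) then g.coeff ((k:ℕ) - m) else 0))]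
  rw [coeff_mul, Finset.Nat.sum_antidiagonal_eq_sum_range_succ (fun a b => f.coeff a * g.coeff b)]
  rw [show ((k:ℕ)+1).succ = ((k:ℕ)+1)+1 from rfl, Finset.sum_range_succ' _ ((k:ℕ)+1)]
  rw [hf0, zero_mul, add_zero]
  rw [← Finset.sum_subset (show Finset.range ((k:ℕ)+1) ⊆ Finset.range n by
    intro m hm; simp only [Finset.mem_range] at *; omega)]
  · apply Finset.sum_congr rfl
    intro i hi
    simp only [Finset.mem_range] at hi
    rw [if_pos (by omega)]
    congr 2
    omega
  · intro m hm hnot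
    simp only [Finset.mem_range] at hnot
    rw [if_neg (by omega), mul_zero]

end Lemmas

/-- master lemma: the case `g₀ ≠ 0`. -/
lemma master (f g : ℂ[X]) (hf : f ≠ 0) (hg : g ≠ 0)
    (n : ℕ) (hn : n = max f.natDegree g.natDegree) (hn1 : 1 ≤ n)
    (hg0 : g.coeff 0 ≠ 0) :
    (Bz n f g).det = 0 ↔ ∃ z : ℂ, f.eval z = 0 ∧ g.eval z = 0 := by
  have hTg : IsUnit (Tp n g).det := by
    rw [det_tp]
    exact (isUnit_iff_ne_zero.mpr (pow_ne_zero n hg0))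
  have hRv : (Rv n).det * (Rv n).det = 1 := by
    rw [← Matrix.det_mul, rv_mul_rv n hn1, Matrix.det_one]
  have hRv0 : (Rv n).det ≠ 0 := fun h => by simp [h] at hRv
  have hUdet : (Matrix.fromBlocks (Tp n g) (-(Tp n f)) 0 1 :
      Matrix (Fin n ⊕ Fin n) (Fin n ⊕ Fin n) ℂ).det = (Tp n g).det := by
    rw [Matrix.det_fromBlocks_zero₂₁, Matrix.det_one, mul_one]
  have hblock := block_identity n hn1 f g
  have hdetUR : (Tp n g).det * (Rs n f g).det =
      (Matrix.fromBlocks 0 (Rv n * (Bz n f g)ᵀ) (Tp n g) (Rv n * Hk n g)).det := by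
    rw [← hblock, Matrix.det_mul, hUdet]
  have hfd : f.natDegree ≤ n := hn ▸ le_max_left _ _
  have hgd : g.natDegree ≤ n := hn ▸ le_max_right _ _
  have h0 : (Rv n * (Bz n f g)ᵀ).det = (Rv n).det * (Bz n f g).det := by
    rw [Matrix.det_mul, Matrix.det_transpose]
  have h1 : (Bz n f g).det = 0 ↔ (Rv n * (Bz n f g)ᵀ).det = 0 := by
    rw [h0]
    constructor
    · intro h; rw [h, mul_zero]
    · intro h
      rcases mul_eq_zero.mp h with h | h
      · exact absurd h hRv0
      · exact h
  have h2 : (Rv n * (Bz n f g)ᵀ).det = 0 ↔ (Rs n f g).det = 0 := by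
    rw [← det_fromBlocks_zero11_eq_zero_iff (Rv n * (Bz n f g)ᵀ) (Tp n g) (Rv n * Hk n g) hTg,
      ← hdetUR]
    constructor
    · intro h
      rcases mul_eq_zero.mp h with h | h
      · exact absurd h hTg.ne_zero
      · exact h
    · intro h; rw [h, mul_zero]
  rw [h1, h2, det_rs_eq_zero_iff f g n hn1 hfd hgd,
    ← not_coprime_iff_exists f g hf hg n hn, ← common_root_iff_not_coprime f g hf]

/-- The Bezoutian matrix of nonzero polynomials `f` and `g` (of size
`n = max(deg f, deg g) ≥ 1`) is singular iff `f` and `g` have a common zero. -/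
theorem bezoutian_det_eq_zero_iff_common_root (f g : ℂ[X])
    (hf : f ≠ 0) (hg : g ≠ 0)
    (n : ℕ) (hn : n = max f.natDegree g.natDegree) (hn1 : 1 ≤ n) :
    (Bz n f g).det = 0 ↔ ∃ z : ℂ, f.eval z = 0 ∧ g.eval z = 0 := by
  by_cases hg0 : g.coeff 0 = 0
  · by_cases hf0 : f.coeff 0 = 0
    · constructor
      · intro _
        exact ⟨0, by rwa [← coeff_zero_eq_eval_zero], by rwa [← coeff_zero_eq_eval_zero]⟩
      · intro _
        apply Matrix.det_eq_zero_of_row_eq_zero (⟨0, hn1⟩ : Fin n)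
        intro k
        rw [Bz, Matrix.sub_apply, hk_tp_row0 n hn1 f g hf0 k, hk_tp_row0 n hn1 g f hg0 k,
          mul_comm f g, sub_self]
    · have hmaster := master g f hg hf n (by rw [hn, max_comm]) hn1 hf0
      have hneg : Bz n g f = -(Bz n f g) := by rw [Bz, Bz, neg_sub]
      have hdet : (Bz n g f).det = (-1 : ℂ) ^ (Fintype.card (Fin n)) * (Bz n f g).det := by
        rw [hneg, Matrix.det_neg]
      have hiff : (Bz n f g).det = 0 ↔ (Bz n g f).det = 0 := by
        rw [hdet]
        constructor
        · intro h; rw [h, mul_zero]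
        · intro h
          rcases mul_eq_zero.mp h with h | h
          · exact absurd h (pow_ne_zero _ (by norm_num))
          · exact h
      rw [hiff, hmaster]
      exact exists_congr fun z => and_comm
  · exact master f g hf hg n hn hn1 hg0
end
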